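/- arXiv:1912.06846 — 6 statements merged into one kernel-verified Lean document; each statement's English description precedes it below -/
import Mathlib

section
/- Let T be a closed linear relation from a Hilbert space \sH to a Hilbert space \sK and let B \in B(\sK) be selfadjoint. Then every pair {h, h'} in the relation T^*(I + iB)T satisfies |Im (h', h)| \le \|B\| Re (h', h); in fact, if {h, \varphi} \in T and {(I+iB)\varphi, h'} \in T^*, then (h', h) = \|\varphi\|^2 + i (B\varphi, \varphi). In particular T^*(I+iB)T is sectorial with vertex at the origin and semi-angle at most arctan \|B\|. -/
open scoped ComplexInnerProductSpace
open Complex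

/-- For a closed linear relation `T ⊂ H × K` and selfadjoint `B ∈ B(K)`:
if `{h,φ} ∈ T` and `{(I+iB)φ, h'} ∈ T*`, then `(h',h) = ‖φ‖² + i(Bφ,φ)`
(in Mathlib's convention `(x,y) = ⟪y,x⟫`), and every `{h,h'} ∈ T*(I+iB)T` satisfies
`|Im (h',h)| ≤ ‖B‖ Re (h',h)`; in particular `T*(I+iB)T` is sectorial with vertex at the
origin and semi-angle at most `arctan ‖B‖`. -/
theorem adjoint_mul_sectorial {H K : Type*} [NormedAddCommGroup H] [InnerProductSpace ℂ H]
    [CompleteSpace H] [NormedAddCommGroup K] [InnerProductSpace ℂ K] [CompleteSpace K]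
    (T : Submodule ℂ (H × K)) (hT : IsClosed (T : Set (H × K)))
    (B : K →L[ℂ] K) (hB : IsSelfAdjoint B) :
    (∀ h h' φ, (h, φ) ∈ T →
      (∀ q ∈ T, ⟪q.1, h'⟫ = ⟪q.2, φ + Complex.I • B φ⟫) →
      ⟪h, h'⟫ = (‖φ‖ : ℂ) ^ 2 + Complex.I * ⟪φ, B φ⟫) ∧
    (∀ h h', (∃ φ, (h, φ) ∈ T ∧ ∀ q ∈ T, ⟪q.1, h'⟫ = ⟪q.2, φ + Complex.I • B φ⟫) →
      |(⟪h, h'⟫).im| ≤ ‖B‖ * (⟪h, h'⟫).re) := by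
  have key : ∀ h h' φ, (h, φ) ∈ T →
      (∀ q ∈ T, ⟪q.1, h'⟫ = ⟪q.2, φ + Complex.I • B φ⟫) →
      ⟪h, h'⟫ = (‖φ‖ : ℂ) ^ 2 + Complex.I * ⟪φ, B φ⟫ := by
    intro h h' φ hmem hadj
    have := hadj (h, φ) hmem
    simp only at this
    rw [this, inner_add_right, inner_smul_right, inner_self_eq_norm_sq_to_K]
    norm_cast
  refine ⟨key, ?_⟩
  rintro h h' ⟨φ, hmem, hadj⟩
  have heq := key h h' φ hmem hadj
  have hreal : (⟪φ, B φ⟫ : ℂ).im = 0 := by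
    have hsym := hB.isSymmetric φ φ
    have hc : (starRingEnd ℂ) ⟪φ, B φ⟫ = ⟪φ, B φ⟫ := by
      rw [inner_conj_symm]; exact hsym
    exact Complex.conj_eq_iff_im.mp hc
  have hre : (⟪h, h'⟫).re = ‖φ‖ ^ 2 := by
    rw [heq]; simp [hreal, ← Complex.ofReal_pow]
  have him : (⟪h, h'⟫).im = (⟪φ, B φ⟫ : ℂ).re := by
    rw [heq]; simp [hreal, ← Complex.ofReal_pow]
  rw [hre, him]
  have h1 : |(⟪φ, B φ⟫ : ℂ).re| ≤ ‖(⟪φ, B φ⟫ : ℂ)‖ := Complex.abs_re_le_norm _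
  have h2 : ‖(⟪φ, B φ⟫ : ℂ)‖ ≤ ‖φ‖ * ‖B φ‖ := norm_inner_le_norm _ _
  have h3 : ‖B φ‖ ≤ ‖B‖ * ‖φ‖ := B.le_opNorm φ
  nlinarith [norm_nonneg φ, norm_nonneg (B φ)]
end

section
/- Let T be a closed linear relation from a Hilbert space \sH to a Hilbert space \sK and let B \in B(\sK) be selfadjoint. Then the linear relation T^*(I + iB)T is closed in \sH \times \sH. -/
open scoped ComplexInnerProductSpace
open Complex

/-- For a closed linear relation `T ⊂ H × K` and selfadjoint `B ∈ B(K)`, the relation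
`T*(I+iB)T = {(h,h') : ∃ φ, (h,φ) ∈ T and ((I+iB)φ, h') ∈ T*}` is closed in `H × H`.
Membership `(k,h') ∈ T*` is encoded by `∀ (f,f') ∈ T, (h',f) = (k,f')`, i.e.
`⟪f,h'⟫ = ⟪f',k⟫` in Mathlib's convention. -/
theorem adjoint_mul_closed {H K : Type*} [NormedAddCommGroup H] [InnerProductSpace ℂ H]
    [CompleteSpace H] [NormedAddCommGroup K] [InnerProductSpace ℂ K] [CompleteSpace K]
    (T : Submodule ℂ (H × K)) (hT : IsClosed (T : Set (H × K)))
    (B : K →L[ℂ] K) (hB : IsSelfAdjoint B) :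
    IsClosed {p : H × H | ∃ φ, (p.1, φ) ∈ T ∧
      ∀ q ∈ T, ⟪q.1, p.2⟫ = ⟪q.2, φ + Complex.I • B φ⟫} := by
  have him : ∀ x : K, (⟪x, B x⟫ : ℂ).im = 0 := by
    intro x
    have : (starRingEnd ℂ) ⟪x, B x⟫ = ⟪x, B x⟫ := by
      rw [inner_conj_symm]; exact hB.isSymmetric x x
    exact Complex.conj_eq_iff_im.mp this
  apply IsSeqClosed.isClosed
  intro u p hu hup
  choose φ h1 h2 using hu
  have est : ∀ n m, ‖φ n - φ m‖ ≤ dist (u n) (u m) := by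
    intro n m
    have hq : (((u n).1 - (u m).1, φ n - φ m) : H × K) ∈ T := T.sub_mem (h1 n) (h1 m)
    have e1 := h2 n _ hq
    have e2 := h2 m _ hq
    have e3 : ⟪(u n).1 - (u m).1, (u n).2 - (u m).2⟫
        = ⟪φ n - φ m, (φ n - φ m) + Complex.I • B (φ n - φ m)⟫ := by
      rw [inner_sub_right, e1, e2, ← inner_sub_right]
      congr 1
      rw [map_sub, smul_sub]
      abel
    set d := dist (u n) (u m) with hd
    have hre : (⟪(u n).1 - (u m).1, (u n).2 - (u m).2⟫ : ℂ).re = ‖φ n - φ m‖ ^ 2 := by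
      rw [e3, inner_add_right, inner_smul_right]
      simp only [Complex.add_re, Complex.mul_re, Complex.I_re, Complex.I_im]
      rw [him (φ n - φ m)]
      have : (⟪φ n - φ m, φ n - φ m⟫ : ℂ) = (‖φ n - φ m‖ : ℂ) ^ 2 := inner_self_eq_norm_sq_to_K _
      rw [this]
      ring_nf
      norm_cast
    have hb1 : ‖(u n).1 - (u m).1‖ ≤ d := by
      rw [← dist_eq_norm, hd, Prod.dist_eq]; exact le_max_left _ _
    have hb2 : ‖(u n).2 - (u m).2‖ ≤ d := by
      rw [← dist_eq_norm, hd, Prod.dist_eq]; exact le_max_right _ _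
    have hle : ‖φ n - φ m‖ ^ 2 ≤ d * d := by
      rw [← hre]
      calc (⟪(u n).1 - (u m).1, (u n).2 - (u m).2⟫ : ℂ).re
          ≤ ‖(⟪(u n).1 - (u m).1, (u n).2 - (u m).2⟫ : ℂ)‖ := Complex.re_le_norm _
        _ ≤ ‖(u n).1 - (u m).1‖ * ‖(u n).2 - (u m).2‖ := norm_inner_le_norm _ _
        _ ≤ d * d := by
            have h0 : (0:ℝ) ≤ d := dist_nonneg
            exact mul_le_mul hb1 hb2 (norm_nonneg _) h0
    nlinarith [norm_nonneg (φ n - φ m), dist_nonneg (x := u n) (y := u m)]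
  have hC : CauchySeq φ := by
    rw [Metric.cauchySeq_iff]
    intro ε hε
    obtain ⟨N, hN⟩ := Metric.cauchySeq_iff.mp hup.cauchySeq ε hε
    refine ⟨N, fun n hn m hm => lt_of_le_of_lt ?_ (hN n hn m hm)⟩
    rw [dist_eq_norm]; exact est n m
  obtain ⟨ψ, hψ⟩ := cauchySeq_tendsto_of_complete hC
  refine ⟨ψ, ?_, ?_⟩
  · have htend : Filter.Tendsto (fun n => (((u n).1, φ n) : H × K)) Filter.atTop (nhds (p.1, ψ)) :=
      (((continuous_fst.tendsto p).comp hup).prodMk_nhds hψ)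
    exact hT.mem_of_tendsto htend (Filter.Eventually.of_forall h1)
  · intro q hq
    have t1 : Filter.Tendsto (fun n => (⟪q.1, (u n).2⟫ : ℂ)) Filter.atTop (nhds ⟪q.1, p.2⟫) :=
      Filter.Tendsto.inner tendsto_const_nhds ((continuous_snd.tendsto p).comp hup)
    have tφ : Filter.Tendsto (fun n => φ n + Complex.I • B (φ n)) Filter.atTop
        (nhds (ψ + Complex.I • B ψ)) :=
      hψ.add (((B.continuous.tendsto ψ).comp hψ).const_smul Complex.I)
    have t2 : Filter.Tendsto (fun n => (⟪q.2, φ n + Complex.I • B (φ n)⟫ : ℂ)) Filter.atTop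
        (nhds ⟪q.2, ψ + Complex.I • B ψ⟫) :=
      Filter.Tendsto.inner tendsto_const_nhds tφ
    have : (fun n => (⟪q.1, (u n).2⟫ : ℂ)) = fun n => ⟪q.2, φ n + Complex.I • B (φ n)⟫ := by
      funext n; exact h2 n q hq
    rw [this] at t1
    exact tendsto_nhds_unique t1 t2
end

section
/- Let T be a closed linear operator from a Hilbert space \sH to a Hilbert space \sK and let B \in B(\sK) be selfadjoint. Then the multivalued part of T^*(I+iB)T equals the multivalued part of T^*, which equals the orthogonal complement of dom T: mul T^*(I+iB)T = mul T^* = (dom T)^\perp. -/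
open scoped ComplexInnerProductSpace
open Complex

/-- For a closed linear operator `T` from `H` to `K` and selfadjoint `B ∈ B(K)`:
`mul T*(I+iB)T = mul T* = (dom T)ᗮ`.  Here `T*` is the relation adjoint of the graph of
`T`, membership `(k,h') ∈ T*` being `∀ (f,f') ∈ graph T, ⟪f,h'⟫ = ⟪f',k⟫`, and
`mul R = {h' : (0,h') ∈ R}`. -/
theorem mul_adjoint_mul {H K : Type*} [NormedAddCommGroup H] [InnerProductSpace ℂ H]
    [CompleteSpace H] [NormedAddCommGroup K] [InnerProductSpace ℂ K] [CompleteSpace K]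
    (T : H →ₗ.[ℂ] K) (hT : IsClosed (T.graph : Set (H × K)))
    (B : K →L[ℂ] K) (hB : IsSelfAdjoint B) :
    {x : H | ∃ φ, ((0 : H), φ) ∈ T.graph ∧
        ∀ q ∈ T.graph, ⟪q.1, x⟫ = ⟪q.2, φ + Complex.I • B φ⟫}
      = {x : H | ∀ q ∈ T.graph, ⟪q.1, x⟫ = ⟪q.2, (0 : K)⟫} ∧
    {x : H | ∀ q ∈ T.graph, ⟪q.1, x⟫ = ⟪q.2, (0 : K)⟫}
      = ((T.domainᗮ : Submodule ℂ H) : Set H) := by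
  constructor
  · ext x
    simp only [Set.mem_setOf_eq]
    constructor
    · rintro ⟨φ, hφ, h⟩
      have hφ0 : φ = 0 := T.graph_fst_eq_zero_snd hφ rfl
      intro q hq
      have := h q hq
      simpa [hφ0] using this
    · intro h
      refine ⟨0, T.graph.zero_mem, fun q hq => ?_⟩
      simpa using h q hq
  · ext x
    simp only [Set.mem_setOf_eq, SetLike.mem_coe, Submodule.mem_orthogonal]
    constructor
    · intro h u hu
      rw [T.mem_domain_iff] at hu
      obtain ⟨y, hy⟩ := hu
      simpa using h (u, y) hy
    · intro h q hq
      simp [h q.1 (T.mem_domain_of_mem_graph hq)]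
end

section
/- Let T, T' be closed linear operators from \sH to \sK and \sK' with dom T = dom T', and let B \in B(\sK), B' \in B(\sK') be selfadjoint. Suppose ((I + iB) T h, T k) = ((I + iB') T' h, T' k) for all h, k \in dom T. Then there is a unitary U : clos(ran T) \to clos(ran T') with T' = U T and B'_{bb} = U B_{bb} U^*, where B_{bb} and B'_{bb} are the compressions of B and B' to clos(ran T) and clos(ran T') respectively. -/
open scoped ComplexInnerProductSpace
open Complex

/-!
Since `B` is selfadjoint, `⟪Tk, (I + iB)Th⟫ = ⟪Tk, Th⟫ + i ⟪Tk, BTh⟫` while the conjugate of the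
same expression with `h` and `k` swapped is `⟪Tk, Th⟫ - i ⟪Tk, BTh⟫`. Hence the hypothesis splits
into `⟪Tk, Th⟫ = ⟪T'k, T'h⟫` and `⟪Tk, BTh⟫ = ⟪T'k, B'T'h⟫`. The first says that `Th ↦ T'h` is a
well-defined isometry from `ran T` onto `ran T'`, which extends to a unitary between the closures;
the second passes to the closures by continuity.
-/

namespace LinearMap

section NormedSpace

variable {𝕜 E E' F F' : Type*} [NormedField 𝕜]
  [AddCommGroup E] [Module 𝕜 E] [AddCommGroup E'] [Module 𝕜 E']
  [NormedAddCommGroup F] [NormedSpace 𝕜 F] [NormedAddCommGroup F'] [NormedSpace 𝕜 F']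

def toRangeClosure (A : E →ₗ[𝕜] F) : E →ₗ[𝕜] (range A).topologicalClosure :=
  A.codRestrict _ fun x => (range A).le_topologicalClosure (mem_range_self A x)

theorem denseRange_toRangeClosure (A : E →ₗ[𝕜] F) : DenseRange A.toRangeClosure := by
  rw [DenseRange, Subtype.dense_iff, ← Set.range_comp]
  exact (range A).topologicalClosure_coe.le

theorem toRangeClosure_apply (A : E →ₗ[𝕜] F) (x : E) : (A.toRangeClosure x : F) = A x := rfl

variable [CompleteSpace F] [CompleteSpace F']

noncomputable def rangeClosureIsometryEquiv (A : E →ₗ[𝕜] F) (A' : E' →ₗ[𝕜] F') (f : E ≃ₗ[𝕜] E')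
    (h : ∀ x, ‖A' (f x)‖ = ‖A x‖) :
    (range A).topologicalClosure ≃ₗᵢ[𝕜] (range A').topologicalClosure :=
  f.extendOfIsometry A.toRangeClosure A'.toRangeClosure A.denseRange_toRangeClosure
    A'.denseRange_toRangeClosure h

theorem rangeClosureIsometryEquiv_apply_toRangeClosure (A : E →ₗ[𝕜] F) (A' : E' →ₗ[𝕜] F')
    (f : E ≃ₗ[𝕜] E') (h : ∀ x, ‖A' (f x)‖ = ‖A x‖) (x : E) :
    rangeClosureIsometryEquiv A A' f h (A.toRangeClosure x) = A'.toRangeClosure (f x) :=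
  f.extendOfIsometry_eq A.toRangeClosure A'.toRangeClosure A.denseRange_toRangeClosure
    A'.denseRange_toRangeClosure h x

end NormedSpace

section InnerProductSpace

variable {𝕜 E E' F F' : Type*} [RCLike 𝕜]
  [AddCommGroup E] [Module 𝕜 E] [AddCommGroup E'] [Module 𝕜 E']
  [NormedAddCommGroup F] [InnerProductSpace 𝕜 F] [CompleteSpace F]
  [NormedAddCommGroup F'] [InnerProductSpace 𝕜 F'] [CompleteSpace F']

theorem inner_rangeClosureIsometryEquiv_apply {A : E →ₗ[𝕜] F} {A' : E' →ₗ[𝕜] F'} {f : E ≃ₗ[𝕜] E'}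
    (h : ∀ x, ‖A' (f x)‖ = ‖A x‖) {B : F →L[𝕜] F} {B' : F' →L[𝕜] F'}
    (hB : ∀ x y, inner 𝕜 (A' (f y)) (B' (A' (f x))) = inner 𝕜 (A y) (B (A x)))
    (x y : (range A).topologicalClosure) :
    inner 𝕜 (rangeClosureIsometryEquiv A A' f h y : F') (B' (rangeClosureIsometryEquiv A A' f h x))
      = inner 𝕜 (y : F) (B x) := by
  refine A.denseRange_toRangeClosure.induction_on₂ (isClosed_eq (by fun_prop) (by fun_prop))
    (fun a b => ?_) x y
  simp only [rangeClosureIsometryEquiv_apply_toRangeClosure, toRangeClosure_apply, hB]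

end InnerProductSpace

end LinearMap

section SelfAdjointForm

variable {K K' : Type*}
  [NormedAddCommGroup K] [InnerProductSpace ℂ K] [NormedAddCommGroup K'] [InnerProductSpace ℂ K']

theorem inner_add_I_smul_apply (B : K →L[ℂ] K) (u v : K) :
    ⟪v, u + I • B u⟫ = ⟪v, u⟫ + I * ⟪v, B u⟫ := by
  rw [inner_add_right, inner_smul_right]

variable [CompleteSpace K] [CompleteSpace K']

theorem conj_inner_add_I_smul_apply {B : K →L[ℂ] K} (hB : IsSelfAdjoint B) (u v : K) :
    (starRingEnd ℂ) ⟪u, v + I • B v⟫ = ⟪v, u⟫ - I * ⟪v, B u⟫ := by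
  rw [inner_add_I_smul_apply, map_add, map_mul, conj_I, inner_conj_symm, inner_conj_symm,
    ← ContinuousLinearMap.adjoint_inner_left, hB.adjoint_eq]
  ring

theorem inner_eq_and_inner_apply_eq_of_inner_add_I_smul_eq {B : K →L[ℂ] K} {B' : K' →L[ℂ] K'}
    (hB : IsSelfAdjoint B) (hB' : IsSelfAdjoint B') {u v : K} {u' v' : K'}
    (huv : ⟪v, u + I • B u⟫ = ⟪v', u' + I • B' u'⟫)
    (hvu : ⟪u, v + I • B v⟫ = ⟪u', v' + I • B' v'⟫) :
    ⟪v, u⟫ = ⟪v', u'⟫ ∧ ⟪v, B u⟫ = ⟪v', B' u'⟫ := by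
  have hsum := congrArg (starRingEnd ℂ) hvu
  rw [inner_add_I_smul_apply, inner_add_I_smul_apply] at huv
  rw [conj_inner_add_I_smul_apply hB, conj_inner_add_I_smul_apply hB'] at hsum
  refine ⟨by linear_combination (huv + hsum) / 2, mul_left_cancel₀ I_ne_zero ?_⟩
  linear_combination (huv - hsum) / 2

end SelfAdjointForm

/-- The compression identity `B'_{bb} = U B_{bb} U*` is stated as `⟪Uy, B'Ux⟫ = ⟪y, Bx⟫` on
`clos(ran T)`. -/
theorem exists_unitary_of_form_eq_general {H K K' : Type*}
    [NormedAddCommGroup H] [InnerProductSpace ℂ H]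
    [NormedAddCommGroup K] [InnerProductSpace ℂ K] [CompleteSpace K]
    [NormedAddCommGroup K'] [InnerProductSpace ℂ K'] [CompleteSpace K']
    (T : H →ₗ.[ℂ] K) (T' : H →ₗ.[ℂ] K')
    (B : K →L[ℂ] K) (hB : IsSelfAdjoint B) (B' : K' →L[ℂ] K') (hB' : IsSelfAdjoint B')
    (hdom : T.domain = T'.domain)
    (hform : ∀ (h k : H) (hh : h ∈ T.domain) (hk : k ∈ T.domain),
      ⟪T ⟨k, hk⟩, T ⟨h, hh⟩ + Complex.I • B (T ⟨h, hh⟩)⟫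
        = ⟪T' ⟨k, hdom ▸ hk⟩, T' ⟨h, hdom ▸ hh⟩ + Complex.I • B' (T' ⟨h, hdom ▸ hh⟩)⟫) :
    ∃ U : (LinearMap.range T.toFun).topologicalClosure ≃ₗᵢ[ℂ]
        (LinearMap.range T'.toFun).topologicalClosure,
      (∀ (h : H) (hh : h ∈ T.domain)
        (hmem : T ⟨h, hh⟩ ∈ (LinearMap.range T.toFun).topologicalClosure),
        ((U ⟨T ⟨h, hh⟩, hmem⟩ : (LinearMap.range T'.toFun).topologicalClosure) : K')
          = T' ⟨h, hdom ▸ hh⟩) ∧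
      ∀ x y : (LinearMap.range T.toFun).topologicalClosure,
        ⟪((U y : (LinearMap.range T'.toFun).topologicalClosure) : K'), B' ((U x : (LinearMap.range T'.toFun).topologicalClosure) : K')⟫
          = ⟪(y : K), B (x : K)⟫ := by
  let f := LinearEquiv.ofEq T.domain T'.domain hdom
  have hsplit (x y : T.domain) :
      ⟪T y, T x⟫ = ⟪T' (f y), T' (f x)⟫ ∧ ⟪T y, B (T x)⟫ = ⟪T' (f y), B' (T' (f x))⟫ :=
    inner_eq_and_inner_apply_eq_of_inner_add_I_smul_eq hB hB'
      (hform x y x.2 y.2) (hform y x y.2 x.2)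
  have hnorm (x : T.domain) : ‖T' (f x)‖ = ‖T x‖ := by
    rw [norm_eq_sqrt_re_inner (𝕜 := ℂ), norm_eq_sqrt_re_inner (𝕜 := ℂ), ← (hsplit x x).1]
  refine ⟨LinearMap.rangeClosureIsometryEquiv T.toFun T'.toFun f hnorm, fun h hh _ => ?_,
    LinearMap.inner_rangeClosureIsometryEquiv_apply hnorm fun x y => (hsplit x y).2.symm⟩
  exact congrArg Subtype.val
    (LinearMap.rangeClosureIsometryEquiv_apply_toRangeClosure T.toFun T'.toFun f hnorm ⟨h, hh⟩)

/-- If `T, T'` are closed operators with the same domain, `B, B'` bounded selfadjoint, and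
`((I+iB)Th, Tk) = ((I+iB')T'h, T'k)` on the common domain, then there is a unitary
`U : clos(ran T) → clos(ran T')` with `T' = U T` and `B'_{bb} = U B_{bb} U*`, where the
compression identity is expressed as `(B' Ux, Uy) = (Bx, y)` for `x, y ∈ clos(ran T)`
(inner products written in Mathlib's convention `(x,y) = ⟪y,x⟫`). -/
theorem exists_unitary_of_form_eq {H K K' : Type*}
    [NormedAddCommGroup H] [InnerProductSpace ℂ H] [CompleteSpace H]
    [NormedAddCommGroup K] [InnerProductSpace ℂ K] [CompleteSpace K]
    [NormedAddCommGroup K'] [InnerProductSpace ℂ K'] [CompleteSpace K']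
    (T : H →ₗ.[ℂ] K) (T' : H →ₗ.[ℂ] K')
    (hT : IsClosed (T.graph : Set (H × K))) (hT' : IsClosed (T'.graph : Set (H × K')))
    (B : K →L[ℂ] K) (hB : IsSelfAdjoint B) (B' : K' →L[ℂ] K') (hB' : IsSelfAdjoint B')
    (hdom : T.domain = T'.domain)
    (hform : ∀ (h k : H) (hh : h ∈ T.domain) (hk : k ∈ T.domain),
      ⟪T ⟨k, hk⟩, T ⟨h, hh⟩ + Complex.I • B (T ⟨h, hh⟩)⟫
        = ⟪T' ⟨k, hdom ▸ hk⟩, T' ⟨h, hdom ▸ hh⟩ + Complex.I • B' (T' ⟨h, hdom ▸ hh⟩)⟫) :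
    ∃ U : (LinearMap.range T.toFun).topologicalClosure ≃ₗᵢ[ℂ]
        (LinearMap.range T'.toFun).topologicalClosure,
      (∀ (h : H) (hh : h ∈ T.domain)
        (hmem : T ⟨h, hh⟩ ∈ (LinearMap.range T.toFun).topologicalClosure),
        ((U ⟨T ⟨h, hh⟩, hmem⟩ : (LinearMap.range T'.toFun).topologicalClosure) : K')
          = T' ⟨h, hdom ▸ hh⟩) ∧
      ∀ x y : (LinearMap.range T.toFun).topologicalClosure,
        ⟪((U y : (LinearMap.range T'.toFun).topologicalClosure) : K'), B' ((U x : (LinearMap.range T'.toFun).topologicalClosure) : K')⟫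
          = ⟪(y : K), B (x : K)⟫ :=
  exists_unitary_of_form_eq_general T T' B hB B' hB' hdom hform
end

section
/- Let \sK = \sM \oplus \sM^\perp and let B = [[B_{11}, B_{12}],[B_{12}^*, B_{22}]] \in B(\sK) be selfadjoint. Define C_0 = I + B_{12}(I + B_{22}^2)^{-1} B_{12}^* and C = C_0^{-1/2}[B_{11} - B_{12}(I + B_{22}^2)^{-1/2} B_{22} (I + B_{22}^2)^{-1/2} B_{12}^*] C_0^{-1/2}, both in B(\sM). Then I + i B_{11} + B_{12}(I + i B_{22})^{-1} B_{12}^* = C_0^{1/2} (I + iC) C_0^{1/2}. -/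
open scoped ComplexInnerProductSpace
open Complex ContinuousLinearMap

/-! Writing `R = (I + B₂₂²)^{-1/2}`, which commutes with `B₂₂`, the resolvent splits as
`(I + iB₂₂)⁻¹ = R (I - iB₂₂) R`. Hence `B₁₂ (I + iB₂₂)⁻¹ B₁₂*` has real part `B₁₂ R² B₁₂* = C₀ - I`
and imaginary part `-B₁₂ R B₂₂ R B₁₂*`, and conjugating by `C₀^{1/2}` recovers both. -/

section Algebra

variable {A : Type*} [Ring A] [Algebra ℂ A]

theorem eq_mul_one_sub_I_smul_mul_of_mul_one_add_I_smul_eq_one {b r v : A} (hrb : Commute r b)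
    (hr : (1 + b * b) * (r * r) = 1) (hv : v * (1 + I • b) = 1) :
    v = r * (1 - I • b) * r := by
  have hrb' : Commute r (1 - I • b) := (Commute.one_right r).sub_right (hrb.smul_right I)
  have hfactor : (1 + I • b) * (1 - I • b) = 1 + b * b := by
    simp only [mul_sub, add_mul, one_mul, mul_one, smul_mul_smul_comm, I_mul_I, neg_one_smul]
    abel
  calc v = v * ((1 + I • b) * ((1 - I • b) * (r * r))) := by
        rw [← mul_assoc (1 + I • b), hfactor, hr, mul_one]
    _ = (1 - I • b) * (r * r) := by rw [← mul_assoc, hv, one_mul]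
    _ = r * (1 - I • b) * r := by rw [hrb'.eq, mul_assoc]

theorem mul_one_add_smul_conj_mul {q qi : A} (hqqi : q * qi = 1) (hqiq : qi * q = 1)
    (z : ℂ) (x : A) : q * (1 + z • (qi * x * qi)) * q = q * q + z • x := by
  have hconj : q * (qi * x * qi) * q = x := by
    rw [← mul_assoc, ← mul_assoc, hqqi, one_mul, mul_assoc, hqiq, mul_one]
  rw [mul_add, add_mul, mul_one, mul_smul_comm, smul_mul_assoc, hconj]

end Algebra

theorem block_factorization_general {M M' : Type*}
    [NormedAddCommGroup M] [InnerProductSpace ℂ M] [CompleteSpace M]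
    [NormedAddCommGroup M'] [InnerProductSpace ℂ M'] [CompleteSpace M']
    (B11 : M →L[ℂ] M)
    (B12 : M' →L[ℂ] M) (B22 : M' →L[ℂ] M')
    (S : M' →L[ℂ] M')
    (hS1 : (1 + B22 ∘L B22) ∘L S = 1)
    (R : M' →L[ℂ] M')
    (hRB : R ∘L B22 = B22 ∘L R) (hRR : R ∘L R = S)
    (Q : M →L[ℂ] M)
    (hQQ : Q ∘L Q = 1 + B12 ∘L S ∘L (ContinuousLinearMap.adjoint B12))
    (Qi : M →L[ℂ] M) (hQi1 : Q ∘L Qi = 1) (hQi2 : Qi ∘L Q = 1)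
    (V : M' →L[ℂ] M')
    (hV2 : V ∘L (1 + Complex.I • B22) = 1) :
    1 + Complex.I • B11 + B12 ∘L V ∘L (ContinuousLinearMap.adjoint B12)
      = Q ∘L (1 + Complex.I •
          (Qi ∘L (B11 - B12 ∘L R ∘L B22 ∘L R ∘L (ContinuousLinearMap.adjoint B12)) ∘L Qi))
          ∘L Q := by
  set B21 := ContinuousLinearMap.adjoint B12
  have hV : V = R ∘L (1 - I • B22) ∘L R :=
    eq_mul_one_sub_I_smul_mul_of_mul_one_add_I_smul_eq_one hRB
      (by rwa [← hRR] at hS1) hV2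
  have hRHS : Q ∘L (1 + I • (Qi ∘L (B11 - B12 ∘L R ∘L B22 ∘L R ∘L B21) ∘L Qi)) ∘L Q
      = Q ∘L Q + I • (B11 - B12 ∘L R ∘L B22 ∘L R ∘L B21) := by
    simpa only [mul_def, comp_assoc] using mul_one_add_smul_conj_mul hQi1 hQi2 I _
  rw [hRHS, hQQ, hV, ← hRR]
  simp only [comp_sub, sub_comp, comp_smul, smul_comp, one_def, id_comp, comp_assoc, smul_sub]
  abel

/-- With `B = [[B₁₁, B₁₂],[B₁₂*, B₂₂]]` selfadjoint with respect to `K = M ⊕ Mᗮ`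
(summands modelled as `M`, `M'`), `S = (I+B₂₂²)⁻¹`, `R = (I+B₂₂²)^{-1/2}`,
`C₀ = I + B₁₂ S B₁₂*`, `Q = C₀^{1/2}` (with inverse `Qi`), `V = (I+iB₂₂)⁻¹`, and
`C = C₀^{-1/2}[B₁₁ - B₁₂ R B₂₂ R B₁₂*] C₀^{-1/2}`, one has
`I + iB₁₁ + B₁₂ (I+iB₂₂)⁻¹ B₁₂* = C₀^{1/2} (I + iC) C₀^{1/2}`. -/
theorem block_factorization {M M' : Type*}
    [NormedAddCommGroup M] [InnerProductSpace ℂ M] [CompleteSpace M]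
    [NormedAddCommGroup M'] [InnerProductSpace ℂ M'] [CompleteSpace M']
    (B11 : M →L[ℂ] M) (hB11 : IsSelfAdjoint B11)
    (B12 : M' →L[ℂ] M) (B22 : M' →L[ℂ] M') (hB22 : IsSelfAdjoint B22)
    (S : M' →L[ℂ] M')
    (hS1 : (1 + B22 ∘L B22) ∘L S = 1) (hS2 : S ∘L (1 + B22 ∘L B22) = 1)
    (R : M' →L[ℂ] M') (hRsa : IsSelfAdjoint R) (hRpos : ∀ x, 0 ≤ (⟪x, R x⟫).re)
    (hRB : R ∘L B22 = B22 ∘L R) (hRR : R ∘L R = S)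
    (Q : M →L[ℂ] M) (hQsa : IsSelfAdjoint Q) (hQpos : ∀ x, 0 ≤ (⟪x, Q x⟫).re)
    (hQQ : Q ∘L Q = 1 + B12 ∘L S ∘L (ContinuousLinearMap.adjoint B12))
    (Qi : M →L[ℂ] M) (hQi1 : Q ∘L Qi = 1) (hQi2 : Qi ∘L Q = 1)
    (V : M' →L[ℂ] M')
    (hV1 : (1 + Complex.I • B22) ∘L V = 1) (hV2 : V ∘L (1 + Complex.I • B22) = 1) :
    1 + Complex.I • B11 + B12 ∘L V ∘L (ContinuousLinearMap.adjoint B12)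
      = Q ∘L (1 + Complex.I •
          (Qi ∘L (B11 - B12 ∘L R ∘L B22 ∘L R ∘L (ContinuousLinearMap.adjoint B12)) ∘L Qi))
          ∘L Q :=
  block_factorization_general B11 B12 B22 S hS1 R hRB hRR Q hQQ Qi hQi1 hQi2 V hV2
end

section
/- Let \sK = \sM \oplus \sM^\perp with orthogonal projection P onto \sM, and let B = [[B_{11}, B_{12}],[B_{12}^*, B_{22}]] \in B(\sK) be selfadjoint. For \varphi = \varphi_1 + \varphi_2 with \varphi_1 \in \sM, \varphi_2 \in \sM^\perp, the vector (I + iB)\varphi lies in \sM if and only if \varphi_2 = -i(I + iB_{22})^{-1} B_{12}^* \varphi_1, and in that case (I + iB)\varphi = C_0^{1/2}(I + iC) C_0^{1/2} \varphi_1. -/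
open scoped ComplexInnerProductSpace
open Complex ContinuousLinearMap

/-!
Solving the second block row for `φ₂` is a Schur complement computation. Since
`(I + iB₂₂)(I - iB₂₂) = I + B₂₂²`, the inverse `(I + iB₂₂)⁻¹` equals `(I - iB₂₂)S`, so
substituting `φ₂` into the first row gives `(I + iB₁₁ + B₁₂(I - iB₂₂)SB₁₂*)φ₁`, i.e.
`(C₀ + i(B₁₁ - B₁₂B₂₂SB₁₂*))φ₁`. As `R` commutes with `B₂₂`, `B₂₂S = RB₂₂R`, and conjugating by
the invertible `Q = C₀^{1/2}` gives `Q(I + iC)Q = C₀ + i(B₁₁ - B₁₂RB₂₂RB₁₂*)`.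
-/

section Algebra

variable {A : Type*} [Ring A]

theorem one_add_I_smul_mul_one_sub_I_smul [Algebra ℂ A] (b : A) :
    (1 + I • b) * (1 - I • b) = 1 + b * b := by
  rw [mul_sub, mul_one, add_mul, one_mul, smul_mul_smul_comm, I_mul_I, neg_one_smul]
  abel

theorem eq_one_sub_I_smul_mul_of_mul_eq_one [Algebra ℂ A] {b s v : A}
    (hs : (1 + b * b) * s = 1) (hv : v * (1 + I • b) = 1) : v = (1 - I • b) * s :=
  calc v = v * ((1 + I • b) * (1 - I • b)) * s := by
        rw [one_add_I_smul_mul_one_sub_I_smul, mul_assoc, hs, mul_one]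
    _ = (1 - I • b) * s := by rw [← mul_assoc, hv, one_mul]

theorem mul_one_add_smul_conj_mul_s12 {k : Type*} [CommSemiring k] [Algebra k A] {q q' : A}
    (h : q * q' = 1) (h' : q' * q = 1) (c : k) (t : A) :
    q * (1 + c • (q' * t * q')) * q = q * q + c • t := by
  rw [mul_add, add_mul, mul_one, mul_smul_comm, smul_mul_assoc, ← mul_assoc, ← mul_assoc, h,
    one_mul, mul_assoc, h', mul_one]

end Algebra

theorem ContinuousLinearMap.apply_eq_iff_eq_apply_of_comp_eq_one {R E : Type*} [Semiring R]
    [AddCommMonoid E] [TopologicalSpace E] [Module R E] {f g : E →L[R] E}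
    (hfg : f ∘L g = 1) (hgf : g ∘L f = 1) {x y : E} : f x = y ↔ x = g y := by
  constructor
  · rintro rfl
    rw [← comp_apply, hgf, one_apply_eq_self]
  · rintro rfl
    rw [← comp_apply, hfg, one_apply_eq_self]

/-- The summands `M`, `Mᗮ` are modelled as `M`, `M'`; `iB₁₂*φ₁ + φ₂ + iB₂₂φ₂` and
`φ₁ + iB₁₁φ₁ + iB₁₂φ₂` are the `Mᗮ`- and `M`-components of `(I+iB)φ`. The operators stand for
`V = (I+iB₂₂)⁻¹`, `S = (I+B₂₂²)⁻¹`, `R = (I+B₂₂²)^{-1/2}`, `Q = C₀^{1/2}` and `Qi = Q⁻¹`. -/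
theorem block_range_condition_general {M M' : Type*}
    [NormedAddCommGroup M] [InnerProductSpace ℂ M] [CompleteSpace M]
    [NormedAddCommGroup M'] [InnerProductSpace ℂ M'] [CompleteSpace M']
    (B11 : M →L[ℂ] M)
    (B12 : M' →L[ℂ] M) (B22 : M' →L[ℂ] M')
    (S : M' →L[ℂ] M')
    (hS1 : (1 + B22 ∘L B22) ∘L S = 1)
    (R : M' →L[ℂ] M')
    (hRB : R ∘L B22 = B22 ∘L R) (hRR : R ∘L R = S)
    (Q : M →L[ℂ] M)
    (hQQ : Q ∘L Q = 1 + B12 ∘L S ∘L (ContinuousLinearMap.adjoint B12))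
    (Qi : M →L[ℂ] M) (hQi1 : Q ∘L Qi = 1) (hQi2 : Qi ∘L Q = 1)
    (V : M' →L[ℂ] M')
    (hV1 : (1 + Complex.I • B22) ∘L V = 1) (hV2 : V ∘L (1 + Complex.I • B22) = 1)
    (φ1 : M) (φ2 : M') :
    (Complex.I • (ContinuousLinearMap.adjoint B12 φ1) + φ2 + Complex.I • B22 φ2 = 0
      ↔ φ2 = -(Complex.I • V (ContinuousLinearMap.adjoint B12 φ1))) ∧
    (Complex.I • (ContinuousLinearMap.adjoint B12 φ1) + φ2 + Complex.I • B22 φ2 = 0 →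
      φ1 + Complex.I • B11 φ1 + Complex.I • B12 φ2
        = Q ((1 + Complex.I •
            (Qi ∘L (B11 - B12 ∘L R ∘L B22 ∘L R ∘L (ContinuousLinearMap.adjoint B12)) ∘L Qi))
            (Q φ1))) := by
  have hV : V = (1 - I • B22) ∘L S := eq_one_sub_I_smul_mul_of_mul_eq_one hS1 hV2
  have hRBR (y : M') : R (B22 (R y)) = B22 (S y) := by
    rw [← comp_apply R, hRB, comp_apply, ← comp_apply R, hRR]
  have hsolve : I • adjoint B12 φ1 + φ2 + I • B22 φ2 = 0 ↔ φ2 = -(I • V (adjoint B12 φ1)) := by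
    have hA : (1 + I • B22) φ2 = φ2 + I • B22 φ2 := rfl
    rw [add_assoc, add_eq_zero_iff_eq_neg', ← hA, apply_eq_iff_eq_apply_of_comp_eq_one hV1 hV2,
      map_neg, map_smul]
  refine ⟨hsolve, fun h => ?_⟩
  have hconj : Q ∘L (1 + I • (Qi ∘L (B11 - B12 ∘L R ∘L B22 ∘L R ∘L adjoint B12) ∘L Qi)) ∘L Q
      = Q ∘L Q + I • (B11 - B12 ∘L R ∘L B22 ∘L R ∘L adjoint B12) := by
    simpa only [mul_def, comp_assoc] using
      mul_one_add_smul_conj_mul_s12 (k := ℂ) hQi1 hQi2 I (B11 - B12 ∘L R ∘L B22 ∘L R ∘L adjoint B12)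
  rw [← comp_apply, ← comp_apply, comp_assoc, hconj, hQQ, hsolve.1 h, hV]
  simp only [comp_apply, add_apply, sub_apply, smul_apply, one_apply_eq_self, hRBR, map_neg,
    map_smul, map_sub, smul_neg, smul_sub, smul_smul, I_mul_I]
  module

/-- Let `B = [[B₁₁, B₁₂],[B₁₂*, B₂₂]]` be a selfadjoint block operator with respect to
`K = M ⊕ Mᗮ` (summands modelled as `M`, `M'`) and `φ = φ₁ + φ₂`.  Writing the components
of `(I+iB)φ` as `η₁ = φ₁ + iB₁₁φ₁ + iB₁₂φ₂` and `η₂ = iB₁₂*φ₁ + φ₂ + iB₂₂φ₂`, one has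
`(I+iB)φ ∈ M` (i.e. `η₂ = 0`) iff `φ₂ = -i(I+iB₂₂)⁻¹B₁₂*φ₁`, and in that case
`(I+iB)φ = C₀^{1/2}(I+iC)C₀^{1/2}φ₁`.  Here `V = (I+iB₂₂)⁻¹`, `S = (I+B₂₂²)⁻¹`,
`R = (I+B₂₂²)^{-1/2}`, `Q = C₀^{1/2}` with `C₀ = I + B₁₂SB₁₂*`, `Qi = Q⁻¹`, and
`C = Qi(B₁₁ - B₁₂RB₂₂RB₁₂*)Qi`. -/
theorem block_range_condition {M M' : Type*}
    [NormedAddCommGroup M] [InnerProductSpace ℂ M] [CompleteSpace M]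
    [NormedAddCommGroup M'] [InnerProductSpace ℂ M'] [CompleteSpace M']
    (B11 : M →L[ℂ] M) (hB11 : IsSelfAdjoint B11)
    (B12 : M' →L[ℂ] M) (B22 : M' →L[ℂ] M') (hB22 : IsSelfAdjoint B22)
    (S : M' →L[ℂ] M')
    (hS1 : (1 + B22 ∘L B22) ∘L S = 1) (hS2 : S ∘L (1 + B22 ∘L B22) = 1)
    (R : M' →L[ℂ] M') (hRsa : IsSelfAdjoint R) (hRpos : ∀ x, 0 ≤ (⟪x, R x⟫).re)
    (hRB : R ∘L B22 = B22 ∘L R) (hRR : R ∘L R = S)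
    (Q : M →L[ℂ] M) (hQsa : IsSelfAdjoint Q) (hQpos : ∀ x, 0 ≤ (⟪x, Q x⟫).re)
    (hQQ : Q ∘L Q = 1 + B12 ∘L S ∘L (ContinuousLinearMap.adjoint B12))
    (Qi : M →L[ℂ] M) (hQi1 : Q ∘L Qi = 1) (hQi2 : Qi ∘L Q = 1)
    (V : M' →L[ℂ] M')
    (hV1 : (1 + Complex.I • B22) ∘L V = 1) (hV2 : V ∘L (1 + Complex.I • B22) = 1)
    (φ1 : M) (φ2 : M') :
    (Complex.I • (ContinuousLinearMap.adjoint B12 φ1) + φ2 + Complex.I • B22 φ2 = 0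
      ↔ φ2 = -(Complex.I • V (ContinuousLinearMap.adjoint B12 φ1))) ∧
    (Complex.I • (ContinuousLinearMap.adjoint B12 φ1) + φ2 + Complex.I • B22 φ2 = 0 →
      φ1 + Complex.I • B11 φ1 + Complex.I • B12 φ2
        = Q ((1 + Complex.I •
            (Qi ∘L (B11 - B12 ∘L R ∘L B22 ∘L R ∘L (ContinuousLinearMap.adjoint B12)) ∘L Qi))
            (Q φ1))) :=
  block_range_condition_general B11 B12 B22 S hS1 R hRB hRR Q hQQ Qi hQi1 hQi2 V hV1 hV2 φ1 φ2
end
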